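/- The generating function of the continuous q-Hermite polynomials satisfies ∑_{n≥0} H_n(cos θ | q) r^n / (q;q)_n = 1 / ((r e^{iθ};q)_∞ (r e^{-iθ};q)_∞) for |r| < 1, |q| < 1. -/

import Mathlib

/-!
Put `E = e^{iθ}`, `F = e^{-iθ}`, so that `E F = 1` and `2 cos θ = E + F`, and let
`e_q(a) = ∑ aⁿ/(q;q)_n` be the q-exponential. The terms `H_n(cos θ) rⁿ/(q;q)_n` and the Cauchy
product coefficients of `e_q(rE) e_q(rF)` satisfy the same three-term recurrence, thanks to the
splitting `1 - q^{k+l} = (1 - q^k) + q^k (1 - q^l)`; hence the series equals `e_q(rE) e_q(rF)`.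
Euler's identity `e_q(a) = 1/(a;q)_∞` follows by iterating `(1 - a) e_q(a) = e_q(qa)` and letting
`q^N a → 0`, using that `e_q` is a power series of radius `1`, hence continuous at `0`.
-/

open Complex

/-- The infinite q-Pochhammer symbol `(a;q)_∞ = ∏_{j≥0} (1 - a q^j)`. -/
noncomputable def qPochInf (a q : ℂ) : ℂ := ∏' j : ℕ, (1 - a * q ^ j)

/-- Finite q-Pochhammer symbol `(q;q)_n = ∏_{j=1}^n (1-q^j)`. -/
noncomputable def qPochQ (q : ℂ) (n : ℕ) : ℂ := ∏ j ∈ Finset.range n, (1 - q ^ (j + 1))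

/-- Continuous q-Hermite polynomials via the three-term recurrence
`2x H_n = H_{n+1} + (1-q^n) H_{n-1}`, `H_0 = 1`, `H_1 = 2x`. -/
noncomputable def qHermite (q : ℂ) : ℕ → ℂ → ℂ
  | 0, _ => 1
  | 1, x => 2 * x
  | (n + 2), x => 2 * x * qHermite q (n + 1) x - (1 - q ^ (n + 1)) * qHermite q n x

open Filter Topology Finset

section

variable {q : ℂ}

lemma qPochQ_zero (q : ℂ) : qPochQ q 0 = 1 :=
  prod_range_zero _

lemma qPochQ_succ (q : ℂ) (n : ℕ) : qPochQ q (n + 1) = qPochQ q n * (1 - q ^ (n + 1)) :=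
  prod_range_succ _ _

lemma one_sub_pow_ne_zero (hq : ‖q‖ < 1) {n : ℕ} (hn : n ≠ 0) : 1 - q ^ n ≠ 0 := by
  refine sub_ne_zero.2 fun h => (pow_lt_one₀ (norm_nonneg q) hq hn).ne ?_
  rw [← norm_pow, ← h, norm_one]

lemma qPochQ_ne_zero (hq : ‖q‖ < 1) (n : ℕ) : qPochQ q n ≠ 0 :=
  prod_ne_zero_iff.2 fun j _ => one_sub_pow_ne_zero hq j.succ_ne_zero

lemma norm_pow_mul_lt_one (hq : ‖q‖ < 1) {a : ℂ} (ha : ‖a‖ < 1) (N : ℕ) :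
    ‖q ^ N * a‖ < 1 := by
  rw [norm_mul, norm_pow]
  exact (mul_le_of_le_one_left (norm_nonneg a) (pow_le_one₀ (norm_nonneg q) hq.le)).trans_lt ha

lemma one_sub_pow_succ_mul_pow_div_qPochQ (hq : ‖q‖ < 1) (a : ℂ) (n : ℕ) :
    (1 - q ^ (n + 1)) * (a ^ (n + 1) / qPochQ q (n + 1)) = a * (a ^ n / qPochQ q n) := by
  have : 1 - q ^ (n + 1) ≠ 0 := one_sub_pow_ne_zero hq n.succ_ne_zero
  rw [qPochQ_succ]
  field_simp
  ring

noncomputable def qExpSeries (q : ℂ) : FormalMultilinearSeries ℂ ℂ ℂ :=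
  FormalMultilinearSeries.ofScalars ℂ fun n => (qPochQ q n)⁻¹

noncomputable def qExp (q a : ℂ) : ℂ := ∑' n, a ^ n / qPochQ q n

lemma qExpSeries_apply (q a : ℂ) (n : ℕ) :
    (qExpSeries q n fun _ => a) = a ^ n / qPochQ q n := by
  rw [qExpSeries, FormalMultilinearSeries.ofScalars_apply_eq, smul_eq_mul, inv_mul_eq_div]

lemma qExpSeries_sum (q : ℂ) : (qExpSeries q).sum = qExp q :=
  funext fun a => tsum_congr fun n => qExpSeries_apply q a n

lemma qExpSeries_radius (hq : ‖q‖ < 1) : (qExpSeries q).radius = 1 := by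
  have hratio : Tendsto (fun n : ℕ => ‖(qPochQ q (n + 1))⁻¹‖ / ‖(qPochQ q n)⁻¹‖)
      atTop (𝓝 ((1 : NNReal) : ℝ)) := by
    have hpow : Tendsto (fun n : ℕ => 1 - q ^ (n + 1)) atTop (𝓝 (1 - 0)) :=
      ((tendsto_pow_atTop_nhds_zero_of_norm_lt_one hq).comp (tendsto_add_atTop_nat 1)).const_sub 1
    have hinv := hpow.norm.inv₀ (by simp)
    simp only [sub_zero, norm_one, inv_one] at hinv
    refine hinv.congr fun n => ?_
    rw [qPochQ_succ, norm_inv, norm_inv, norm_mul, mul_inv, div_eq_mul_inv, inv_inv,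
      mul_right_comm, inv_mul_cancel₀ (norm_ne_zero_iff.2 (qPochQ_ne_zero hq n)), one_mul]
  rw [qExpSeries,
    FormalMultilinearSeries.ofScalars_radius_eq_inv_of_tendsto ℂ _ one_ne_zero hratio]
  simp

lemma mem_eball_qExpSeries_radius (hq : ‖q‖ < 1) {a : ℂ} (ha : ‖a‖ < 1) :
    a ∈ Metric.eball (0 : ℂ) (qExpSeries q).radius := by
  rw [qExpSeries_radius hq, mem_eball_zero_iff, ← ofReal_norm, ENNReal.ofReal_lt_one]
  exact ha

lemma summable_norm_pow_div_qPochQ (hq : ‖q‖ < 1) {a : ℂ} (ha : ‖a‖ < 1) :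
    Summable fun n => ‖a ^ n / qPochQ q n‖ := by
  simpa only [qExpSeries_apply] using
    (qExpSeries q).summable_norm_apply (mem_eball_qExpSeries_radius hq ha)

lemma continuousAt_qExp_zero (hq : ‖q‖ < 1) : ContinuousAt (qExp q) 0 := by
  rw [← qExpSeries_sum]
  exact (qExpSeries q).continuousOn.continuousAt
    (Metric.isOpen_eball.mem_nhds (mem_eball_qExpSeries_radius hq (by simp)))

lemma qExp_zero (q : ℂ) : qExp q 0 = 1 := by
  rw [qExp, tsum_eq_single 0 fun n hn => by simp [hn]]
  simp [qPochQ_zero]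

lemma one_sub_mul_qExp (hq : ‖q‖ < 1) {a : ℂ} (ha : ‖a‖ < 1) :
    (1 - a) * qExp q a = qExp q (q * a) := by
  have hqa : ‖q * a‖ < 1 := by simpa using norm_pow_mul_lt_one hq ha 1
  have hsa := (summable_norm_pow_div_qPochQ hq ha).of_norm
  have hsqa := (summable_norm_pow_div_qPochQ hq hqa).of_norm
  suffices qExp q a - qExp q (q * a) = a * qExp q a by linear_combination this
  rw [qExp, qExp, ← hsa.tsum_sub hsqa, (hsa.sub hsqa).tsum_eq_zero_add, ← tsum_mul_left]
  simp only [pow_zero, sub_self, zero_add]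
  refine tsum_congr fun n => ?_
  rw [mul_pow, ← sub_div, ← one_sub_mul, mul_div_assoc, one_sub_pow_succ_mul_pow_div_qPochQ hq]

lemma multipliable_one_sub_mul_pow (hq : ‖q‖ < 1) (a : ℂ) :
    Multipliable fun j : ℕ => 1 - a * q ^ j := by
  simpa only [sub_eq_add_neg] using Complex.multipliable_one_add_of_summable
    ((summable_geometric_of_norm_lt_one hq).mul_left a).neg

lemma prod_range_one_sub_mul_pow_mul_qExp (hq : ‖q‖ < 1) {a : ℂ} (ha : ‖a‖ < 1) (N : ℕ) :
    (∏ j ∈ range N, (1 - a * q ^ j)) * qExp q a = qExp q (q ^ N * a) := by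
  induction N with
  | zero => simp
  | succ N ih =>
    rw [prod_range_succ, mul_right_comm, mul_comm a, ih, mul_comm,
      one_sub_mul_qExp hq (norm_pow_mul_lt_one hq ha N), pow_succ', mul_assoc]

theorem qExp_eq_one_div_qPochInf (hq : ‖q‖ < 1) {a : ℂ} (ha : ‖a‖ < 1) :
    qExp q a = 1 / qPochInf a q := by
  have hprod :=
    ((multipliable_one_sub_mul_pow hq a).hasProd.tendsto_prod_nat).mul_const (qExp q a)
  have hlim : Tendsto (fun N : ℕ => qExp q (q ^ N * a)) atTop (𝓝 1) := by
    rw [← qExp_zero q]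
    refine (continuousAt_qExp_zero hq).tendsto.comp ?_
    simpa using (tendsto_pow_atTop_nhds_zero_of_norm_lt_one hq).mul_const a
  simp only [prod_range_one_sub_mul_pow_mul_qExp hq ha] at hprod
  exact eq_one_div_of_mul_eq_one_right (tendsto_nhds_unique hprod hlim)

section Convolution

variable {A B : ℂ} {e f : ℕ → ℂ}

lemma sum_antidiagonal_succ_one_sub_pow_fst_mul
    (he : ∀ k, (1 - q ^ (k + 1)) * e (k + 1) = A * e k) (n : ℕ) :
    ∑ p ∈ antidiagonal (n + 1), (1 - q ^ p.1) * (e p.1 * f p.2)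
      = A * ∑ p ∈ antidiagonal n, e p.1 * f p.2 := by
  rw [Nat.sum_antidiagonal_succ, mul_sum]
  simp only [pow_zero, sub_self, zero_mul, zero_add, ← mul_assoc, he]

lemma sum_antidiagonal_succ_pow_fst_mul_one_sub_pow_snd
    (hf : ∀ k, (1 - q ^ (k + 1)) * f (k + 1) = B * f k) (n : ℕ) :
    ∑ p ∈ antidiagonal (n + 1), q ^ p.1 * (1 - q ^ p.2) * (e p.1 * f p.2)
      = B * ∑ p ∈ antidiagonal n, q ^ p.1 * (e p.1 * f p.2) := by
  rw [Nat.sum_antidiagonal_succ', mul_sum]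
  refine (add_eq_right.2 (by simp)).trans (sum_congr rfl fun p _ => ?_)
  linear_combination q ^ p.1 * e p.1 * hf p.2

/-- The splitting `1 - q^(k+l) = (1 - q^k) + q^k (1 - q^l)` shifts one index down in each term. -/
theorem sum_antidiagonal_recurrence (he : ∀ k, (1 - q ^ (k + 1)) * e (k + 1) = A * e k)
    (hf : ∀ k, (1 - q ^ (k + 1)) * f (k + 1) = B * f k) (n : ℕ) :
    (1 - q ^ (n + 2)) * ∑ p ∈ antidiagonal (n + 2), e p.1 * f p.2
      = (A + B) * ∑ p ∈ antidiagonal (n + 1), e p.1 * f p.2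
        - A * B * ∑ p ∈ antidiagonal n, e p.1 * f p.2 := by
  have hsplit : (1 - q ^ (n + 2)) * ∑ p ∈ antidiagonal (n + 2), e p.1 * f p.2
      = ∑ p ∈ antidiagonal (n + 2), (1 - q ^ p.1) * (e p.1 * f p.2)
        + ∑ p ∈ antidiagonal (n + 2), q ^ p.1 * (1 - q ^ p.2) * (e p.1 * f p.2) := by
    rw [mul_sum, ← sum_add_distrib]
    refine sum_congr rfl fun p hp => ?_
    rw [← mem_antidiagonal.1 hp, pow_add]
    ring
  have hpow : ∑ p ∈ antidiagonal (n + 1), q ^ p.1 * (e p.1 * f p.2)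
      = ∑ p ∈ antidiagonal (n + 1), e p.1 * f p.2
        - ∑ p ∈ antidiagonal (n + 1), (1 - q ^ p.1) * (e p.1 * f p.2) := by
    rw [← sum_sub_distrib]
    exact sum_congr rfl fun p _ => by ring
  rw [hsplit, sum_antidiagonal_succ_one_sub_pow_fst_mul he,
    sum_antidiagonal_succ_pow_fst_mul_one_sub_pow_snd hf, hpow,
    sum_antidiagonal_succ_one_sub_pow_fst_mul he]
  ring

end Convolution

/-- For `x = (E + F) / 2` with `E F = 1`, the term `H_n(x) r^n / (q;q)_n` is the `n`-th Cauchy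
coefficient of `qExp q (r E) * qExp q (r F)`. -/
theorem qHermite_mul_pow_div_qPochQ (hq : ‖q‖ < 1) {x E F : ℂ} (hEF : E * F = 1)
    (hx : 2 * x = E + F) (r : ℂ) : ∀ n, qHermite q n x * r ^ n / qPochQ q n
      = ∑ p ∈ antidiagonal n, (r * E) ^ p.1 / qPochQ q p.1 * ((r * F) ^ p.2 / qPochQ q p.2)
  | 0 => by simp [qHermite, qPochQ_zero]
  | 1 => by
    rw [Nat.sum_antidiagonal_succ, HasAntidiagonal.antidiagonal_zero, sum_singleton, qHermite]
    simp only [zero_add, pow_zero, pow_one, qPochQ_zero]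
    linear_combination r / qPochQ q 1 * hx
  | n + 2 => by
    have hn1 := qHermite_mul_pow_div_qPochQ hq hEF hx r (n + 1)
    have hn0 := qHermite_mul_pow_div_qPochQ hq hEF hx r n
    have h2 : 1 - q ^ (n + 2) ≠ 0 := one_sub_pow_ne_zero hq (n + 1).succ_ne_zero
    refine mul_left_cancel₀ h2 ?_
    have hrec := sum_antidiagonal_recurrence (e := fun k => (r * E) ^ k / qPochQ q k)
      (f := fun k => (r * F) ^ k / qPochQ q k) (one_sub_pow_succ_mul_pow_div_qPochQ hq (r * E))
      (one_sub_pow_succ_mul_pow_div_qPochQ hq (r * F)) n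
    beta_reduce at hrec
    rw [hrec, ← hn1, ← hn0]
    have h0 := qPochQ_ne_zero hq n
    have h1 : 1 - q ^ (n + 1) ≠ 0 := one_sub_pow_ne_zero hq n.succ_ne_zero
    rw [qHermite, qPochQ_succ, qPochQ_succ]
    field_simp
    linear_combination qHermite q (n + 1) x * r ^ (n + 2) * hx
      + (1 - q ^ (n + 1)) * qHermite q n x * r ^ (n + 2) * hEF

end

/-- Generating function of the continuous q-Hermite polynomials:
`∑_{n≥0} H_n(cos θ|q) r^n/(q;q)_n = 1/((r e^{iθ};q)_∞ (r e^{-iθ};q)_∞)`. -/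
theorem qHermite_generating_function (q r : ℂ) (θ : ℝ)
    (hq : ‖q‖ < 1) (hr : ‖r‖ < 1) :
    ∑' n : ℕ, qHermite q n ((Real.cos θ : ℂ)) * r ^ n / qPochQ q n =
      1 / (qPochInf (r * Complex.exp (I * θ)) q * qPochInf (r * Complex.exp (-I * θ)) q) := by
  set E := Complex.exp (I * θ)
  set F := Complex.exp (-I * θ)
  have hEF : E * F = 1 := by rw [← Complex.exp_add, neg_mul, add_neg_cancel, Complex.exp_zero]
  have hx : 2 * (Real.cos θ : ℂ) = E + F := by
    rw [ofReal_cos, two_cos]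
    congr 2 <;> ring
  have hrE : ‖r * E‖ < 1 := by simpa [E, norm_exp] using hr
  have hrF : ‖r * F‖ < 1 := by simpa [F, norm_exp] using hr
  calc ∑' n : ℕ, qHermite q n ((Real.cos θ : ℂ)) * r ^ n / qPochQ q n
      = ∑' n, ∑ p ∈ antidiagonal n,
          (r * E) ^ p.1 / qPochQ q p.1 * ((r * F) ^ p.2 / qPochQ q p.2) :=
        tsum_congr (qHermite_mul_pow_div_qPochQ hq hEF hx r)
    _ = qExp q (r * E) * qExp q (r * F) :=
        (tsum_mul_tsum_eq_tsum_sum_antidiagonal_of_summable_norm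
          (summable_norm_pow_div_qPochQ hq hrE) (summable_norm_pow_div_qPochQ hq hrF)).symm
    _ = 1 / (qPochInf (r * E) q * qPochInf (r * F) q) := by
        rw [qExp_eq_one_div_qPochInf hq hrE, qExp_eq_one_div_qPochInf hq hrF, one_div_mul_one_div]
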